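/- Let D_j = {2^{j−1}(2s−1) : s ∈ ℕ} for j ∈ ℕ, and let I be the ideal of all subsets of ℕ that intersect only finitely many of the D_j. Define the real sequence x_n = 1/j^j for n ∈ D_j. Then for every r ≥ 0: (a) the interval [−r, r] is contained in the rough I-limit set of degree r of (x_n), and (b) −r is not a rough I*-limit of degree r of (x_n). -/

import Mathlib

/-- `I` is an ideal of subsets of ℕ: closed under finite unions and subsets. -/
def IsIdeal (I : Set (Set ℕ)) : Prop :=
  (∀ A B : Set ℕ, A ∈ I → B ∈ I → A ∪ B ∈ I) ∧
  (∀ A B : Set ℕ, A ∈ I → B ⊆ A → B ∈ I)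

/-- A nontrivial admissible ideal: an ideal containing all singletons, with ℕ ∉ I. -/
def IsAdmissibleIdeal (I : Set (Set ℕ)) : Prop :=
  IsIdeal I ∧ (∀ n : ℕ, ({n} : Set ℕ) ∈ I) ∧ (Set.univ : Set ℕ) ∉ I

/-- The subsequence of `x` over `M` rough converges to `l` of degree `r`:
for each ε > 0, ‖x m − l‖ < r + ε for all but finitely many m ∈ M. -/
def RoughConvAlong {X : Type*} [NormedAddCommGroup X]
    (M : Set ℕ) (x : ℕ → X) (r : ℝ) (l : X) : Prop :=
  ∀ ε > (0:ℝ), {m ∈ M | r + ε ≤ ‖x m - l‖}.Finite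

/-- Rough I-convergence of degree r to l. -/
def RoughIConv (I : Set (Set ℕ)) {X : Type*} [NormedAddCommGroup X]
    (x : ℕ → X) (r : ℝ) (l : X) : Prop :=
  ∀ ε > (0:ℝ), {n : ℕ | r + ε ≤ ‖x n - l‖} ∈ I

/-- Rough I*-convergence of degree r to l. -/
def RoughIStarConv (I : Set (Set ℕ)) {X : Type*} [NormedAddCommGroup X]
    (x : ℕ → X) (r : ℝ) (l : X) : Prop :=
  ∃ M : Set ℕ, Mᶜ ∈ I ∧ RoughConvAlong M x r l

/-- The trace ideal K|M = {A ∩ M : A ∈ K}. -/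
def traceIdeal (K : Set (Set ℕ)) (M : Set ℕ) : Set (Set ℕ) :=
  {A | ∃ B ∈ K, A = B ∩ M}

/-- Rough I^K-convergence of degree r to l: there is M with Mᶜ ∈ I such that the
set of indices of the subsequence over M lying outside the (r+ε)-ball belongs to K|M. -/
def RoughIKConv (I K : Set (Set ℕ)) {X : Type*} [NormedAddCommGroup X]
    (x : ℕ → X) (r : ℝ) (l : X) : Prop :=
  ∃ M : Set ℕ, Mᶜ ∈ I ∧
    ∀ ε > (0:ℝ), {m ∈ M | r + ε ≤ ‖x m - l‖} ∈ traceIdeal K M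

/-- The condition (AP) for an ideal I. -/
def APcond (I : Set (Set ℕ)) : Prop :=
  ∀ A : ℕ → Set ℕ, (∀ j, A j ∈ I) → (Pairwise (Function.onFun Disjoint A)) →
    ∃ B : ℕ → Set ℕ, (∀ j, B j ∈ I) ∧ (∀ j, (symmDiff (A j) (B j)).Finite) ∧
      (⋃ j, B j) ∈ I

/-- The condition AP(I,K). -/
def APIK (I K : Set (Set ℕ)) : Prop :=
  ∀ A : ℕ → Set ℕ, (∀ j, A j ∈ I) → (Pairwise (Function.onFun Disjoint A)) →
    ∃ B : ℕ → Set ℕ, (∀ j, B j ∈ I) ∧ (∀ j, symmDiff (A j) (B j) ∈ K) ∧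
      (⋃ j, B j) ∈ I

/-- `D j` (paper's `D_{j+1}`): naturals of the form `2^j * (odd)`. -/
def Dset (j : ℕ) : Set ℕ := {n | ∃ s : ℕ, n = 2 ^ j * (2 * s + 1)}

/-- The ideal `I` of the example: sets meeting only finitely many of the `Dset j`. -/
def idealI : Set (Set ℕ) := {S | {j : ℕ | (S ∩ Dset j).Nonempty}.Finite}

/-- The sequence of the example: `x n = 1/j^j` when `n ∈ D_j` (paper indexing),
i.e. `x n = 1/(ν₂(n)+1)^(ν₂(n)+1)`. -/
noncomputable def xseq (n : ℕ) : ℝ :=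
  1 / ((padicValNat 2 n + 1 : ℝ) ^ (padicValNat 2 n + 1))

/-!
The sets `Dset j` partition the positive integers, and `xseq` equals `1/(j+1)^(j+1)` on `Dset j`.
Since `xseq ≥ ε` only on finitely many `Dset j`, `xseq` is `I`-convergent to `0`, so every point
of `[-r, r]` is a rough `I`-limit of degree `r`. On the other hand, a set `M` with `Mᶜ ∈ I` misses
only finitely many `Dset j`, hence contains a whole (infinite) `Dset j`, on which
`|xseq n + r| = r + 1/(j+1)^(j+1)` stays bounded away from `r`; so `-r` is not a rough `I*`-limit.
-/

section RoughConvergence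

variable {X : Type*} [NormedAddCommGroup X]

theorem RoughIConv.of_norm_le {I : Set (Set ℕ)} (hI : IsIdeal I) {x : ℕ → X}
    (hx : RoughIConv I x 0 0) {r : ℝ} {l : X} (hl : ‖l‖ ≤ r) : RoughIConv I x r l := by
  intro ε hε
  refine hI.2 _ _ (hx ε hε) fun n hn => ?_
  have hn : r + ε ≤ ‖x n - l‖ := hn
  show 0 + ε ≤ ‖x n - 0‖
  rw [sub_zero, zero_add]
  linarith [norm_sub_le (x n) l]

theorem not_roughConvAlong_of_infinite {M S : Set ℕ} {x : ℕ → X} {r ε : ℝ} {l : X}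
    (hSM : S ⊆ M) (hS : S.Infinite) (hε : 0 < ε) (hfar : ∀ n ∈ S, r + ε ≤ ‖x n - l‖) :
    ¬ RoughConvAlong M x r l :=
  fun h => hS ((h ε hε).subset fun n hn => ⟨hSM hn, hfar n hn⟩)

end RoughConvergence

theorem padicValNat_two_of_mem_Dset {j n : ℕ} (h : n ∈ Dset j) : padicValNat 2 n = j := by
  obtain ⟨s, rfl⟩ := h
  rw [padicValNat.mul (by positivity) (by omega), padicValNat.prime_pow,
    padicValNat.eq_zero_of_not_dvd (by omega), add_zero]

theorem Dset_infinite (j : ℕ) : (Dset j).Infinite :=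
  Set.infinite_of_injective_forall_mem
    (fun a b hab => by simpa using hab : Function.Injective fun s : ℕ => 2 ^ j * (2 * s + 1))
    fun s => ⟨s, rfl⟩

theorem isAdmissibleIdeal_idealI : IsAdmissibleIdeal idealI := by
  refine ⟨⟨fun A B hA hB => ?_, fun A B hA hBA => ?_⟩, fun n => ?_, ?_⟩
  · show {j | ((A ∪ B) ∩ Dset j).Nonempty}.Finite
    simp only [Set.union_inter_distrib_right, Set.union_nonempty, Set.ofPred_or]
    exact hA.union hB
  · exact hA.subset fun j ⟨m, hm, hd⟩ => ⟨m, hBA hm, hd⟩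
  · refine (Set.finite_singleton (padicValNat 2 n)).subset ?_
    rintro j ⟨m, rfl, hd⟩
    exact (padicValNat_two_of_mem_Dset hd).symm
  · intro h
    refine Set.infinite_univ (h.subset fun j _ => ?_)
    obtain ⟨n, hn⟩ := (Dset_infinite j).nonempty
    exact ⟨n, Set.mem_univ n, hn⟩

theorem compl_mem_idealI_exists_Dset_subset {M : Set ℕ} (hM : Mᶜ ∈ idealI) :
    ∃ j, Dset j ⊆ M := by
  obtain ⟨j, hj⟩ := hM.infinite_compl.nonempty
  exact ⟨j, fun n hn => by_contra fun hnM => hj ⟨n, hnM, hn⟩⟩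

theorem xseq_of_mem_Dset {j n : ℕ} (h : n ∈ Dset j) : xseq n = 1 / ((j + 1 : ℝ) ^ (j + 1)) := by
  rw [xseq, padicValNat_two_of_mem_Dset h]

theorem xseq_pos (n : ℕ) : 0 < xseq n := by
  unfold xseq
  positivity

theorem xseq_le_of_mem_Dset {j n : ℕ} (h : n ∈ Dset j) : xseq n ≤ 1 / (j + 1 : ℝ) := by
  rw [xseq_of_mem_Dset h]
  gcongr
  exact le_self_pow₀ (by linarith [j.cast_nonneg (α := ℝ)]) (by omega)

theorem roughIConv_idealI_xseq_zero : RoughIConv idealI xseq 0 0 := by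
  intro ε hε
  refine (Set.finite_Iic ⌈1 / ε⌉₊).subset ?_
  rintro j ⟨n, hn, hd⟩
  have hεx : ε ≤ 1 / (j + 1 : ℝ) := by
    have hn : 0 + ε ≤ ‖xseq n - 0‖ := hn
    rw [sub_zero, zero_add, Real.norm_of_nonneg (xseq_pos n).le] at hn
    exact hn.trans (xseq_le_of_mem_Dset hd)
  have hj : (j : ℝ) + 1 ≤ 1 / ε := (le_one_div hε (by positivity)).mp hεx
  exact Nat.cast_le.mp ((le_add_of_nonneg_right zero_le_one).trans (hj.trans (Nat.le_ceil _)))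

theorem stmt19 :
    IsAdmissibleIdeal idealI ∧
    ∀ r : ℝ, 0 ≤ r →
      (∀ l ∈ Set.Icc (-r) r, RoughIConv idealI xseq r l) ∧
      ¬ RoughIStarConv idealI xseq r (-r) := by
  refine ⟨isAdmissibleIdeal_idealI, fun r hr => ⟨fun l hl => ?_, ?_⟩⟩
  · exact roughIConv_idealI_xseq_zero.of_norm_le isAdmissibleIdeal_idealI.1
      (abs_le.mpr hl)
  · rintro ⟨M, hM, hconv⟩
    obtain ⟨j, hDM⟩ := compl_mem_idealI_exists_Dset_subset hM
    refine not_roughConvAlong_of_infinite hDM (Dset_infinite j)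
      (by positivity : (0 : ℝ) < 1 / ((j + 1 : ℝ) ^ (j + 1))) (fun n hn => ?_) hconv
    rw [sub_neg_eq_add, Real.norm_of_nonneg (by linarith [xseq_pos n]), xseq_of_mem_Dset hn,
      add_comm]
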